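/- arXiv:2203.14573 — 3 statements merged into one kernel-verified Lean document; each statement's English description precedes it below -/
import Mathlib

section
/- For all real numbers 0 < p ≤ 0.1, 0 < s ≤ 0.1, and every integer k ≥ 1, we have s^{2k} - (s(1-p)/(1-ps))^{2k} ≥ (p s²)^k. -/
theorem s_pow_sub_rho_pow_ge (p s : ℝ) (hp : 0 < p) (hp' : p ≤ 0.1)
    (hs : 0 < s) (hs' : s ≤ 0.1) (k : ℕ) (hk : 1 ≤ k) :
    (p * s ^ 2) ^ k ≤ s ^ (2 * k) - (s * (1 - p) / (1 - p * s)) ^ (2 * k) := by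
  have hd : 0 < 1 - p * s := by nlinarith
  set r := (1 - p) / (1 - p * s) with hr
  have hr0 : 0 ≤ r := div_nonneg (by linarith) hd.le
  have hr1 : r ≤ 1 := by rw [hr, div_le_one hd]; nlinarith
  have h1 : p ^ k ≤ p := by
    calc p ^ k ≤ p ^ 1 := pow_le_pow_of_le_one hp.le (by linarith) hk
    _ = p := pow_one p
  have h2 : r ^ (2 * k) ≤ r ^ 2 := pow_le_pow_of_le_one hr0 hr1 (by omega)
  have h3 : r ^ 2 ≤ 1 - p := by
    rw [hr, div_pow, div_le_iff₀ (by positivity)]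
    nlinarith [mul_nonneg (mul_nonneg (by linarith : (0:ℝ) ≤ 1 - p) hp.le)
      (by nlinarith : (0:ℝ) ≤ 1 - 2 * s + p * s ^ 2)]
  have key : p ^ k + r ^ (2 * k) ≤ 1 := by linarith
  have expand : (s * (1 - p) / (1 - p * s)) ^ (2 * k) = s ^ (2 * k) * r ^ (2 * k) := by
    rw [hr, mul_div_assoc, mul_pow]
  have expand2 : (p * s ^ 2) ^ k = p ^ k * s ^ (2 * k) := by
    rw [mul_pow, ← pow_mul, mul_comm 2 k]
  rw [expand, expand2]
  have hs2 : (0:ℝ) < s ^ (2 * k) := by positivity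
  nlinarith [mul_le_mul_of_nonneg_right key hs2.le]
end

section
/- For all real numbers 0 < p ≤ 0.1, 0 < s ≤ 0.1, and every integer k ≥ 1, the quantity (1 + ρ^{2k} - s^{2k})/(1 - (ps²)^k) is at most 1, where ρ = s(1-p)/(1-ps). -/
theorem conditional_orbit_ratio_le_one (p s : ℝ) (hp : 0 < p) (hp' : p ≤ 0.1)
    (hs : 0 < s) (hs' : s ≤ 0.1) (k : ℕ) (hk : 1 ≤ k) :
    (1 + (s * (1 - p) / (1 - p * s)) ^ (2 * k) - s ^ (2 * k)) / (1 - (p * s ^ 2) ^ k) ≤ 1 := by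
  have hps : p * s ≤ 0.01 := by nlinarith
  have h1ps : 0 < 1 - p * s := by linarith
  have hps2 : p * s ^ 2 < 1 := by nlinarith
  have hps2nn : 0 ≤ p * s ^ 2 := by positivity
  have hden : 0 < 1 - (p * s ^ 2) ^ k := by
    have := pow_lt_one₀ hps2nn hps2 (by omega : k ≠ 0)
    linarith
  rw [div_le_one hden]
  -- reduce to ρ^{2k} + (p s²)^k ≤ s^{2k}
  have h1p : (0:ℝ) ≤ 1 - p := by linarith
  set a : ℝ := (1 - p) / (1 - p * s) with ha
  have hanonneg : 0 ≤ a := div_nonneg h1p h1ps.le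
  have ha2 : a ^ 2 ≤ 1 - p := by
    rw [ha, div_pow, div_le_iff₀ (by positivity)]
    have haux : 0 ≤ (1 - p) * (p * (1 - 2 * s)) := by
      apply mul_nonneg h1p; apply mul_nonneg hp.le; linarith
    nlinarith [sq_nonneg (p * s), haux]
  have hak : a ^ (2 * k) ≤ (1 - p) ^ k := by
    calc a ^ (2 * k) = (a ^ 2) ^ k := by rw [← pow_mul]
    _ ≤ (1 - p) ^ k := pow_le_pow_left₀ (by positivity) ha2 k
  have hsum : (1 - p) ^ k + p ^ k ≤ 1 := by
    have h1 : (1 - p) ^ k ≤ 1 - p := pow_le_of_le_one h1p (by linarith) (by omega)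
    have h2 : p ^ k ≤ p := pow_le_of_le_one hp.le (by linarith) (by omega)
    linarith
  have key : (s * a) ^ (2 * k) + (p * s ^ 2) ^ k ≤ s ^ (2 * k) := by
    have e1 : (s * a) ^ (2 * k) = s ^ (2 * k) * a ^ (2 * k) := mul_pow s a (2*k)
    have e2 : (p * s ^ 2) ^ k = s ^ (2 * k) * p ^ k := by
      rw [mul_pow, ← pow_mul]; ring
    have hsnn : (0:ℝ) ≤ s ^ (2 * k) := by positivity
    rw [e1, e2]
    calc s ^ (2 * k) * a ^ (2 * k) + s ^ (2 * k) * p ^ k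
        = s ^ (2 * k) * (a ^ (2 * k) + p ^ k) := by ring
      _ ≤ s ^ (2 * k) * 1 := by
          apply mul_le_mul_of_nonneg_left _ hsnn
          have : a ^ (2 * k) + p ^ k ≤ (1 - p) ^ k + p ^ k := by linarith
          linarith
      _ = s ^ (2 * k) := by ring
  have : s * (1 - p) / (1 - p * s) = s * a := by rw [ha]; ring
  rw [this]
  linarith
end

section
/- Fix constants λ > 0, ρ > 1, and let c > 0 satisfy (ρ-1)·log(1/c) > C for a suitable constant C = C(λ,ρ). Then for G ~ G(n, λ/n), the probability that there exists a nonempty vertex subset U with |U| ≤ cn whose induced subgraph has edge-vertex ratio strictly greater than ρ tends to 0 as n → ∞. -/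
open Finset Filter

set_option maxHeartbeats 1000000

lemma sum_le_sum_biUnion {α β : Type*} [DecidableEq α] (I : Finset β) (g : β → Finset α)
    (s : Finset α) (f : α → ℝ) (hf : ∀ a, 0 ≤ f a) (hs : ∀ a ∈ s, ∃ b ∈ I, a ∈ g b) :
    ∑ a ∈ s, f a ≤ ∑ b ∈ I, ∑ a ∈ g b, f a := by
  classical
  calc ∑ a ∈ s, f a ≤ ∑ a ∈ I.biUnion g, f a :=
      Finset.sum_le_sum_of_subset_of_nonneg
        (fun a ha => Finset.mem_biUnion.2 (hs a ha)) (fun a _ _ => hf a)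
    _ ≤ ∑ b ∈ I, ∑ a ∈ g b, f a := by
      clear hs
      induction I using Finset.induction_on with
      | empty => simp
      | @insert b I' hb ih =>
        rw [Finset.biUnion_insert, Finset.sum_insert hb]
        calc ∑ a ∈ g b ∪ I'.biUnion g, f a
            ≤ ∑ a ∈ g b, f a + ∑ a ∈ I'.biUnion g, f a := by
              have := Finset.sum_union_inter (s₁ := g b) (s₂ := I'.biUnion g) (f := f)
              have h2 : 0 ≤ ∑ a ∈ g b ∩ I'.biUnion g, f a := Finset.sum_nonneg fun a _ => hf a
              linarith
          _ ≤ _ := by linarith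

lemma sum_prod_forced {ι : Type*} [Fintype ι] [DecidableEq ι] (f : ι → Bool → ℝ) (T : Finset ι) :
    ∑ ω ∈ Finset.univ.filter (fun ω : ι → Bool => ∀ i ∈ T, ω i = true), ∏ i, f i (ω i)
      = (∏ i ∈ T, f i true) * ∏ i ∈ Tᶜ, (f i false + f i true) := by
  classical
  have hset : Finset.univ.filter (fun ω : ι → Bool => ∀ i ∈ T, ω i = true)
      = Fintype.piFinset (fun i => if i ∈ T then ({true} : Finset Bool) else Finset.univ) := by
    ext ω
    simp only [Finset.mem_filter, Finset.mem_univ, true_and, Fintype.mem_piFinset]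
    constructor
    · intro h i
      by_cases hi : i ∈ T <;> simp [hi, h i]
    · intro h i hi
      have := h i
      simpa [hi] using this
  rw [hset, ← Finset.prod_univ_sum]
  rw [← Finset.prod_mul_prod_compl T]
  congr 1
  · exact Finset.prod_congr rfl fun i hi => by simp [hi]
  · refine Finset.prod_congr rfl fun i hi => ?_
    have hi' : i ∉ T := by simpa using hi
    simp [hi', add_comm]

lemma pow_self_le_exp_mul_factorial (t : ℕ) : (t : ℝ) ^ t ≤ Real.exp t * t.factorial := by
  have h := Real.pow_div_factorial_le_exp (x := (t : ℝ)) (Nat.cast_nonneg t) t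
  have ht : (0:ℝ) < t.factorial := by positivity
  rw [div_le_iff₀ ht] at h
  linarith [h]

lemma choose_le_exp_bound (m t : ℕ) (ht : 1 ≤ t) :
    (m.choose t : ℝ) ≤ (Real.exp 1 * m / t) ^ t := by
  have h1 : (m.choose t : ℝ) ≤ (m : ℝ) ^ t / t.factorial := Nat.choose_le_pow_div t m
  have ht0 : (0:ℝ) < t := by exact_mod_cast ht
  have hfac : (0:ℝ) < t.factorial := by positivity
  have h2 : ((t:ℝ)^t) * ((m : ℝ) ^ t / t.factorial) ≤ (Real.exp t * t.factorial) * ((m:ℝ)^t / t.factorial) := by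
    apply mul_le_mul_of_nonneg_right (pow_self_le_exp_mul_factorial t)
    positivity
  have h3 : (Real.exp t * t.factorial) * ((m:ℝ)^t / t.factorial) = Real.exp t * (m:ℝ)^t := by
    field_simp
  have h4 : (Real.exp 1 * m / t) ^ t = Real.exp t * (m:ℝ)^t / (t:ℝ)^t := by
    rw [div_pow, mul_pow, ← Real.exp_one_pow]
  rw [h4, le_div_iff₀ (pow_pos ht0 t)]
  calc (m.choose t : ℝ) * (t:ℝ)^t ≤ ((m : ℝ) ^ t / t.factorial) * (t:ℝ)^t := by
        apply mul_le_mul_of_nonneg_right h1; positivity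
    _ = (t:ℝ)^t * ((m : ℝ) ^ t / t.factorial) := by ring
    _ ≤ Real.exp t * (m:ℝ)^t := by rw [← h3]; exact h2
lemma prob_count_ge {ι : Type*} [Fintype ι] [DecidableEq ι] (p : ℝ) (hp0 : 0 ≤ p) (hp1 : p ≤ 1)
    (E : Finset ι) (t : ℕ) :
    ∑ ω ∈ Finset.univ.filter (fun ω : ι → Bool =>
        t ≤ (E.filter (fun e => ω e = true)).card),
      ∏ e, (if ω e then p else 1 - p)
    ≤ (E.card.choose t) * p ^ t := by
  classical
  have hf : ∀ ω : ι → Bool, 0 ≤ ∏ e, (if ω e then p else 1 - p) := by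
    intro ω; apply Finset.prod_nonneg; intro e _
    by_cases h : ω e <;> simp [h, hp0] <;> linarith
  have cover : ∀ ω ∈ Finset.univ.filter (fun ω : ι → Bool =>
      t ≤ (E.filter (fun e => ω e = true)).card),
      ∃ T ∈ E.powersetCard t,
        ω ∈ Finset.univ.filter (fun ω : ι → Bool => ∀ i ∈ T, ω i = true) := by
    intro ω hω
    rw [Finset.mem_filter] at hω
    obtain ⟨T, hT, hTc⟩ := Finset.exists_subset_card_eq hω.2
    refine ⟨T, Finset.mem_powersetCard.2 ⟨hT.trans (Finset.filter_subset _ _), hTc⟩, ?_⟩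
    simp only [Finset.mem_filter, Finset.mem_univ, true_and]
    intro i hi
    exact (Finset.mem_filter.1 (hT hi)).2
  calc _ ≤ ∑ T ∈ E.powersetCard t,
        ∑ ω ∈ Finset.univ.filter (fun ω : ι → Bool => ∀ i ∈ T, ω i = true),
          ∏ e, (if ω e then p else 1 - p) :=
        sum_le_sum_biUnion _ _ _ _ hf cover
    _ = ∑ T ∈ E.powersetCard t, p ^ t := by
        apply Finset.sum_congr rfl
        intro T hT
        have := sum_prod_forced (fun _ b => if b then p else 1 - p) T
        simp only at this
        rw [this]
        have hTc : T.card = t := (Finset.mem_powersetCard.1 hT).2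
        simp [Finset.prod_const, hTc]
    _ = (E.card.choose t) * p ^ t := by
        rw [Finset.sum_const, Finset.card_powersetCard, nsmul_eq_mul]
lemma prob_A_U {n : ℕ} (p ρ : ℝ) (hp0 : 0 ≤ p) (hp1 : p ≤ 1) (U : Finset (Fin n)) :
    ∑ ω ∈ Finset.univ.filter (fun ω : Sym2 (Fin n) → Bool =>
        ρ * U.card < ((Finset.univ.filter (fun e : Sym2 (Fin n) =>
            e ∈ U.sym2 ∧ ¬e.IsDiag ∧ ω e = true)).card : ℝ)),
      ∏ e : Sym2 (Fin n), (if ω e then p else 1 - p)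
    ≤ ((U.card ^ 2).choose ⌈ρ * U.card⌉₊) * p ^ ⌈ρ * U.card⌉₊ := by
  classical
  set E : Finset (Sym2 (Fin n)) :=
    Finset.univ.filter (fun e : Sym2 (Fin n) => e ∈ U.sym2 ∧ ¬e.IsDiag) with hE
  set t : ℕ := ⌈ρ * U.card⌉₊ with ht
  have hf : ∀ ω : Sym2 (Fin n) → Bool, 0 ≤ ∏ e, (if ω e then p else 1 - p) := by
    intro ω; apply Finset.prod_nonneg; intro e _
    by_cases h : ω e <;> simp [h, hp0] <;> linarith
  have hcard : ∀ ω : Sym2 (Fin n) → Bool,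
      (Finset.univ.filter (fun e : Sym2 (Fin n) =>
        e ∈ U.sym2 ∧ ¬e.IsDiag ∧ ω e = true)).card
      = (E.filter (fun e => ω e = true)).card := by
    intro ω
    rw [hE, Finset.filter_filter]
    congr 1
    apply Finset.filter_congr
    intro e _
    simp [and_assoc]
  have hsub : Finset.univ.filter (fun ω : Sym2 (Fin n) → Bool =>
        ρ * U.card < ((Finset.univ.filter (fun e : Sym2 (Fin n) =>
            e ∈ U.sym2 ∧ ¬e.IsDiag ∧ ω e = true)).card : ℝ))
      ⊆ Finset.univ.filter (fun ω : Sym2 (Fin n) → Bool =>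
        t ≤ (E.filter (fun e => ω e = true)).card) := by
    intro ω hω
    rw [Finset.mem_filter] at hω ⊢
    refine ⟨hω.1, ?_⟩
    rw [← hcard ω]
    exact Nat.ceil_le.2 (le_of_lt hω.2)
  calc _ ≤ ∑ ω ∈ Finset.univ.filter (fun ω : Sym2 (Fin n) → Bool =>
        t ≤ (E.filter (fun e => ω e = true)).card),
      ∏ e, (if ω e then p else 1 - p) :=
        Finset.sum_le_sum_of_subset_of_nonneg hsub (fun ω _ _ => hf ω)
    _ ≤ (E.card.choose t) * p ^ t := prob_count_ge p hp0 hp1 E t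
    _ ≤ ((U.card ^ 2).choose t) * p ^ t := by
        apply mul_le_mul_of_nonneg_right _ (by positivity)
        have h1 : E.card ≤ U.sym2.card := by
          apply Finset.card_le_card
          intro e he
          exact (Finset.mem_filter.1 he).2.1
        have h2 : U.sym2.card ≤ U.card ^ 2 := by
          rw [Finset.card_sym2]
          have : (U.card + 1).choose 2 = (U.card + 1) * U.card / 2 := by
            rw [Nat.choose_two_right]; simp
          rw [this]
          calc (U.card + 1) * U.card / 2 ≤ 2 * U.card ^ 2 / 2 := by
                apply Nat.div_le_div_right; nlinarith [Nat.zero_le U.card]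
            _ = U.card ^ 2 := by omega
        exact_mod_cast Nat.choose_le_choose t (h1.trans h2)
lemma per_k_bound (lam ρ : ℝ) (hlam : 0 < lam) (hρ : 1 < ρ) (n k : ℕ) (hn : 1 ≤ n) (hk : 1 ≤ k)
    (hβ : Real.exp 1 * lam / ρ * ((k : ℝ) / n) ≤ 1) :
    (n.choose k : ℝ) * (((k ^ 2).choose ⌈ρ * k⌉₊ : ℝ) * (lam / n) ^ ⌈ρ * k⌉₊)
      ≤ (Real.exp 1 * (Real.exp 1 * lam / ρ) ^ (ρ : ℝ) * (((k : ℝ) / n) ^ (ρ - 1))) ^ k := by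
  have e1 : (0:ℝ) < Real.exp 1 := Real.exp_pos 1
  have hρ0 : (0:ℝ) < ρ := by linarith
  have hk0 : (0:ℝ) < k := by exact_mod_cast hk
  have hn0 : (0:ℝ) < n := by exact_mod_cast hn
  set t : ℕ := ⌈ρ * k⌉₊ with htdef
  have htk : ρ * k ≤ (t : ℝ) := Nat.le_ceil _
  have ht0 : (0:ℝ) < t := lt_of_lt_of_le (by positivity) htk
  have ht1 : 1 ≤ t := by exact_mod_cast Nat.one_le_cast.2 (by exact_mod_cast Nat.cast_pos.1 ht0)
  have hp0 : (0:ℝ) ≤ lam / n := by positivity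
  set β : ℝ := Real.exp 1 * lam / ρ * ((k : ℝ) / n) with hβdef
  have hβ0 : 0 < β := by rw [hβdef]; positivity
  have base1 : Real.exp 1 * ((k:ℝ)^2) / t * (lam / n) ≤ β := by
    rw [hβdef]
    rw [div_mul_eq_mul_div, div_le_iff₀ ht0]
    have h2 : Real.exp 1 * lam / ρ * ((k:ℝ) / n) * (ρ * k) ≤ Real.exp 1 * lam / ρ * ((k:ℝ) / n) * t :=
      mul_le_mul_of_nonneg_left htk (by positivity)
    calc Real.exp 1 * (k:ℝ)^2 * (lam / n) = Real.exp 1 * lam / ρ * ((k:ℝ) / n) * (ρ * k) := by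
          field_simp
      _ ≤ _ := h2
  calc (n.choose k : ℝ) * (((k ^ 2).choose t : ℝ) * (lam / n) ^ t)
      ≤ (Real.exp 1 * n / k) ^ k * ((Real.exp 1 * ((k:ℝ)^2) / t) ^ t * (lam / n) ^ t) := by
        apply mul_le_mul (choose_le_exp_bound n k hk)
        · apply mul_le_mul_of_nonneg_right _ (by positivity)
          have := choose_le_exp_bound (k^2) t ht1
          simpa using this
        · positivity
        · positivity
    _ = (Real.exp 1 * n / k) ^ k * (Real.exp 1 * ((k:ℝ)^2) / t * (lam / n)) ^ t := by
        rw [mul_pow]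
    _ ≤ (Real.exp 1 * n / k) ^ k * β ^ t := by
        apply mul_le_mul_of_nonneg_left _ (by positivity)
        exact pow_le_pow_left₀ (by positivity) base1 t
    _ ≤ (Real.exp 1 * n / k) ^ k * β ^ (ρ * (k:ℝ)) := by
        apply mul_le_mul_of_nonneg_left _ (by positivity)
        rw [← Real.rpow_natCast β t]
        exact Real.rpow_le_rpow_of_exponent_ge hβ0 hβ htk
    _ = (Real.exp 1 * n / k) ^ k * (β ^ (ρ:ℝ)) ^ k := by
        rw [← Real.rpow_natCast (β ^ (ρ:ℝ)) k, ← Real.rpow_mul (le_of_lt hβ0)]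
    _ = ((Real.exp 1 * n / k) * β ^ (ρ:ℝ)) ^ k := by rw [mul_pow]
    _ = (Real.exp 1 * (Real.exp 1 * lam / ρ) ^ (ρ : ℝ) * (((k : ℝ) / n) ^ (ρ - 1))) ^ k := by
        congr 1
        rw [hβdef, Real.mul_rpow (by positivity) (by positivity)]
        rw [show ρ - 1 = ρ + (-1) by ring, Real.rpow_add (by positivity), Real.rpow_neg_one]
        field_simp
lemma tail_sum_bound (A ρ c : ℝ) (hA : 0 < A) (hρ : 1 < ρ) (hc : 0 < c)
    (n : ℕ) (hn : 1 ≤ n)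
    (hAc : A * c ^ (ρ - 1) ≤ 1 / 2)
    (hAδ : A * (((Nat.sqrt n : ℝ))⁻¹ ^ (ρ - 1)) ≤ 1 / 2) :
    ∑ k ∈ Finset.Icc 1 n, (if (k : ℝ) ≤ c * n then
        (A * (((k : ℝ) / n) ^ (ρ - 1))) ^ k else 0)
      ≤ 2 * (A * (((Nat.sqrt n : ℝ))⁻¹ ^ (ρ - 1))) + (n : ℝ) * (1 / 2 : ℝ) ^ Nat.sqrt n := by
  set s : ℕ := Nat.sqrt n with hs
  have hs1 : 1 ≤ s := by rw [hs]; exact Nat.sqrt_pos.2 hn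
  have hs0 : (0:ℝ) < s := by exact_mod_cast hs1
  have hn0 : (0:ℝ) < n := by exact_mod_cast hn
  set δ : ℝ := ((s : ℝ))⁻¹ ^ (ρ - 1) with hδ
  have hδ0 : 0 ≤ δ := Real.rpow_nonneg (by positivity) _
  have hAδ0 : 0 ≤ A * δ := by positivity
  have key : ∀ k ∈ Finset.Icc 1 n,
      (if (k : ℝ) ≤ c * n then (A * (((k : ℝ) / n) ^ (ρ - 1))) ^ k else 0)
        ≤ (if k ≤ s then (A * δ) * (1 / 2 : ℝ) ^ (k - 1) else (1 / 2 : ℝ) ^ s) := by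
    intro k hk
    rw [Finset.mem_Icc] at hk
    have hk0 : (0:ℝ) < k := by exact_mod_cast hk.1
    by_cases hks : k ≤ s
    · rw [if_pos hks]
      split_ifs with hkc
      · have h1 : (k : ℝ) / n ≤ ((s : ℝ))⁻¹ := by
          rw [div_le_iff₀ hn0, inv_mul_eq_div, le_div_iff₀ hs0]
          have h2 : (k : ℝ) * s ≤ (s : ℝ) * s := by
            apply mul_le_mul_of_nonneg_right _ (le_of_lt hs0)
            exact_mod_cast hks
          have h3 : (s : ℝ) * s ≤ n := by
            have := Nat.sqrt_le n
            exact_mod_cast this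
          linarith
        have h4 : A * (((k : ℝ) / n) ^ (ρ - 1)) ≤ A * δ := by
          apply mul_le_mul_of_nonneg_left _ (le_of_lt hA)
          exact Real.rpow_le_rpow (by positivity) h1 (by linarith)
        have h5 : (A * (((k : ℝ) / n) ^ (ρ - 1))) ^ k ≤ (A * δ) ^ k := by
          apply pow_le_pow_left₀ _ h4
          positivity
        have h6 : (A * δ) ^ k = (A * δ) * (A * δ) ^ (k - 1) := by
          conv_lhs => rw [show k = (k - 1) + 1 by omega]
          rw [pow_succ]; ring
        have h7 : (A * δ) ^ (k - 1) ≤ (1 / 2 : ℝ) ^ (k - 1) :=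
          pow_le_pow_left₀ hAδ0 hAδ _
        calc (A * (((k : ℝ) / n) ^ (ρ - 1))) ^ k ≤ (A * δ) ^ k := h5
          _ = (A * δ) * (A * δ) ^ (k - 1) := h6
          _ ≤ (A * δ) * (1 / 2 : ℝ) ^ (k - 1) := mul_le_mul_of_nonneg_left h7 hAδ0
      · positivity
    · rw [if_neg hks]
      split_ifs with hkc
      · have h1 : (k : ℝ) / n ≤ c := by rw [div_le_iff₀ hn0]; exact hkc
        have h4 : A * (((k : ℝ) / n) ^ (ρ - 1)) ≤ 1 / 2 := by
          calc A * (((k : ℝ) / n) ^ (ρ - 1)) ≤ A * c ^ (ρ - 1) := by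
                apply mul_le_mul_of_nonneg_left _ (le_of_lt hA)
                exact Real.rpow_le_rpow (by positivity) h1 (by linarith)
            _ ≤ 1 / 2 := hAc
        calc (A * (((k : ℝ) / n) ^ (ρ - 1))) ^ k ≤ (1 / 2 : ℝ) ^ k := by
              apply pow_le_pow_left₀ (by positivity) h4
          _ ≤ (1 / 2 : ℝ) ^ s := by
              apply pow_le_pow_of_le_one (by norm_num) (by norm_num)
              omega
      · positivity
  calc ∑ k ∈ Finset.Icc 1 n, (if (k : ℝ) ≤ c * n then
          (A * (((k : ℝ) / n) ^ (ρ - 1))) ^ k else 0)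
      ≤ ∑ k ∈ Finset.Icc 1 n,
          (if k ≤ s then (A * δ) * (1 / 2 : ℝ) ^ (k - 1) else (1 / 2 : ℝ) ^ s) :=
        Finset.sum_le_sum key
    _ = ∑ k ∈ (Finset.Icc 1 n).filter (fun k => k ≤ s), (A * δ) * (1 / 2 : ℝ) ^ (k - 1)
        + ∑ k ∈ (Finset.Icc 1 n).filter (fun k => ¬ k ≤ s), (1 / 2 : ℝ) ^ s := by
        rw [Finset.sum_ite]
    _ ≤ (A * δ) * 2 + (n : ℝ) * (1 / 2 : ℝ) ^ s := by
        have part1 : ∑ k ∈ (Finset.Icc 1 n).filter (fun k => k ≤ s),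
            (A * δ) * (1 / 2 : ℝ) ^ (k - 1) ≤ (A * δ) * 2 := by
          calc _ ≤ ∑ k ∈ Finset.Icc 1 n, (A * δ) * (1 / 2 : ℝ) ^ (k - 1) :=
                Finset.sum_le_sum_of_subset_of_nonneg (Finset.filter_subset _ _)
                  (fun k _ _ => by positivity)
            _ = (A * δ) * ∑ k ∈ Finset.Icc 1 n, (1 / 2 : ℝ) ^ (k - 1) := by
                rw [Finset.mul_sum]
            _ ≤ (A * δ) * 2 := by
                apply mul_le_mul_of_nonneg_left _ hAδ0
                have : Finset.Icc 1 n = Finset.Ico 1 (n + 1) := by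
                  rw [← Finset.Ico_add_one_right_eq_Icc]
                rw [this, Finset.sum_Ico_eq_sum_range]
                simp only [Nat.add_sub_cancel]
                calc ∑ i ∈ Finset.range n, (1 / 2 : ℝ) ^ (1 + i - 1)
                    = ∑ i ∈ Finset.range n, (1 / 2 : ℝ) ^ i := by
                      apply Finset.sum_congr rfl; intro i _; congr 1; omega
                  _ ≤ 2 := sum_geometric_two_le n
        have part2 : ∑ k ∈ (Finset.Icc 1 n).filter (fun k => ¬ k ≤ s),
            (1 / 2 : ℝ) ^ s ≤ (n : ℝ) * (1 / 2 : ℝ) ^ s := by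
          rw [Finset.sum_const, nsmul_eq_mul]
          apply mul_le_mul_of_nonneg_right _ (by positivity)
          have h1 : ((Finset.Icc 1 n).filter (fun k => ¬ k ≤ s)).card ≤ n := by
            calc _ ≤ (Finset.Icc 1 n).card := Finset.card_filter_le _ _
              _ = n := by rw [Nat.card_Icc]; omega
          exact_mod_cast h1
        linarith
    _ ≤ _ := by rw [hδ]; linarith
lemma group_by_card {n : ℕ} (c : ℝ) (gk : ℕ → ℝ) (hgk0 : ∀ k, 0 ≤ gk k) :
    ∑ U ∈ (Finset.univ : Finset (Fin n)).powerset.filter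
        (fun U => U.Nonempty ∧ (U.card : ℝ) ≤ c * n), gk U.card
    ≤ ∑ k ∈ (Finset.Icc 1 n).filter (fun k : ℕ => (k : ℝ) ≤ c * n), (n.choose k : ℝ) * gk k := by
  classical
  calc ∑ U ∈ (Finset.univ : Finset (Fin n)).powerset.filter
        (fun U => U.Nonempty ∧ (U.card : ℝ) ≤ c * n), gk U.card
      ≤ ∑ k ∈ (Finset.Icc 1 n).filter (fun k : ℕ => (k : ℝ) ≤ c * n),
          ∑ U ∈ Finset.powersetCard k (Finset.univ : Finset (Fin n)), gk U.card := by
        refine sum_le_sum_biUnion ((Finset.Icc 1 n).filter (fun k : ℕ => (k : ℝ) ≤ c * n))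
          (fun k => Finset.powersetCard k (Finset.univ : Finset (Fin n))) _
          (fun U => gk U.card) (fun U => hgk0 U.card) ?_
        intro U hU
        rw [Finset.mem_filter] at hU
        obtain ⟨_, hU1, hU2⟩ := hU
        refine ⟨U.card, ?_, Finset.mem_powersetCard.2 ⟨Finset.subset_univ U, rfl⟩⟩
        rw [Finset.mem_filter, Finset.mem_Icc]
        refine ⟨⟨Finset.card_pos.2 hU1, ?_⟩, hU2⟩
        calc U.card ≤ Fintype.card (Fin n) := Finset.card_le_univ U
          _ = n := Fintype.card_fin n
    _ = ∑ k ∈ (Finset.Icc 1 n).filter (fun k : ℕ => (k : ℝ) ≤ c * n), (n.choose k : ℝ) * gk k := by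
        apply Finset.sum_congr rfl
        intro k _
        have h : ∀ U ∈ Finset.powersetCard k (Finset.univ : Finset (Fin n)),
            gk U.card = gk k := fun U hU => by rw [(Finset.mem_powersetCard.1 hU).2]
        rw [Finset.sum_congr rfl h, Finset.sum_const, Finset.card_powersetCard,
          Finset.card_univ, Fintype.card_fin, nsmul_eq_mul]

lemma event_le_sum_gk (lam ρ c : ℝ) (n : ℕ) (hp0 : 0 ≤ lam / (n:ℝ)) (hp1 : lam / (n:ℝ) ≤ 1) :
    ∑ ω ∈ (Finset.univ : Finset (Sym2 (Fin n) → Bool)).filter (fun ω =>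
        ∃ U : Finset (Fin n), U.Nonempty ∧ (U.card : ℝ) ≤ c * n ∧
          ρ * U.card <
            ((Finset.univ.filter (fun e : Sym2 (Fin n) =>
                e ∈ U.sym2 ∧ ¬e.IsDiag ∧ ω e = true)).card : ℝ)),
      ∏ e : Sym2 (Fin n), (if ω e then lam / n else 1 - lam / n)
    ≤ ∑ U ∈ (Finset.univ : Finset (Fin n)).powerset.filter
        (fun U => U.Nonempty ∧ (U.card : ℝ) ≤ c * n),
      (((U.card ^ 2).choose ⌈ρ * U.card⌉₊ : ℝ) * (lam / n) ^ ⌈ρ * U.card⌉₊) := by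
  classical
  set p : ℝ := lam / n with hp
  have hf : ∀ ω : Sym2 (Fin n) → Bool, 0 ≤ ∏ e, (if ω e then p else 1 - p) := by
    intro ω; apply Finset.prod_nonneg; intro e _
    by_cases h : ω e <;> simp [h, hp0] <;> linarith
  set I : Finset (Finset (Fin n)) :=
    (Finset.univ : Finset (Fin n)).powerset.filter
      (fun U => U.Nonempty ∧ (U.card : ℝ) ≤ c * n) with hI
  calc ∑ ω ∈ (Finset.univ : Finset (Sym2 (Fin n) → Bool)).filter (fun ω =>
        ∃ U : Finset (Fin n), U.Nonempty ∧ (U.card : ℝ) ≤ c * n ∧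
          ρ * U.card <
            ((Finset.univ.filter (fun e : Sym2 (Fin n) =>
                e ∈ U.sym2 ∧ ¬e.IsDiag ∧ ω e = true)).card : ℝ)),
      ∏ e : Sym2 (Fin n), (if ω e then p else 1 - p)
      ≤ ∑ U ∈ I, ∑ ω ∈ Finset.univ.filter (fun ω : Sym2 (Fin n) → Bool =>
          ρ * U.card < ((Finset.univ.filter (fun e : Sym2 (Fin n) =>
              e ∈ U.sym2 ∧ ¬e.IsDiag ∧ ω e = true)).card : ℝ)),
          ∏ e : Sym2 (Fin n), (if ω e then p else 1 - p) := by
        apply sum_le_sum_biUnion _ _ _ _ hf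
        intro ω hω
        rw [Finset.mem_filter] at hω
        obtain ⟨U, hU1, hU2, hU3⟩ := hω.2
        refine ⟨U, ?_, Finset.mem_filter.2 ⟨Finset.mem_univ ω, hU3⟩⟩
        rw [hI]
        exact Finset.mem_filter.2 ⟨Finset.mem_powerset.2 (Finset.subset_univ U), hU1, hU2⟩
    _ ≤ ∑ U ∈ I, (((U.card ^ 2).choose ⌈ρ * U.card⌉₊ : ℝ) * p ^ ⌈ρ * U.card⌉₊) := by
        apply Finset.sum_le_sum
        intro U _
        have h := prob_A_U p ρ hp0 hp1 U
        calc _ ≤ (((U.card ^ 2).choose ⌈ρ * U.card⌉₊ : ℝ)) * p ^ ⌈ρ * U.card⌉₊ := h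
          _ = _ := rfl

lemma final_numeric (lam ρ c : ℝ) (hlam : 0 < lam) (hρ : 1 < ρ) (hc : 0 < c)
    (n : ℕ) (hn : 1 ≤ n) (hM : c * (Real.exp 1 * lam / ρ) < 1) :
    ∑ k ∈ (Finset.Icc 1 n).filter (fun k : ℕ => (k : ℝ) ≤ c * n),
      (n.choose k : ℝ) * (((k ^ 2).choose ⌈ρ * k⌉₊ : ℝ) * (lam / n) ^ ⌈ρ * k⌉₊)
    ≤ ∑ k ∈ Finset.Icc 1 n, (if (k : ℝ) ≤ c * n then
        (Real.exp 1 * (Real.exp 1 * lam / ρ) ^ (ρ : ℝ) * (((k : ℝ) / n) ^ (ρ - 1))) ^ k else 0) := by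
  have hn0 : (0:ℝ) < n := by exact_mod_cast hn
  calc ∑ k ∈ (Finset.Icc 1 n).filter (fun k : ℕ => (k : ℝ) ≤ c * n),
      (n.choose k : ℝ) * (((k ^ 2).choose ⌈ρ * k⌉₊ : ℝ) * (lam / n) ^ ⌈ρ * k⌉₊)
      ≤ ∑ k ∈ (Finset.Icc 1 n).filter (fun k : ℕ => (k : ℝ) ≤ c * n),
        (Real.exp 1 * (Real.exp 1 * lam / ρ) ^ (ρ : ℝ) * (((k : ℝ) / n) ^ (ρ - 1))) ^ k := by
        apply Finset.sum_le_sum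
        intro k hk
        rw [Finset.mem_filter, Finset.mem_Icc] at hk
        apply per_k_bound lam ρ hlam hρ n k hn hk.1.1
        have hkn : (k : ℝ) / n ≤ c := by
          rw [div_le_iff₀ hn0]; exact hk.2
        refine le_of_lt ?_
        calc Real.exp 1 * lam / ρ * ((k : ℝ) / n) ≤ Real.exp 1 * lam / ρ * c := by
              apply mul_le_mul_of_nonneg_left hkn
              have : (0:ℝ) < ρ := by linarith
              positivity
          _ < 1 := by rw [mul_comm]; exact hM
    _ = _ := by rw [Finset.sum_filter]

lemma per_n_bound (lam ρ c : ℝ) (hlam : 0 < lam) (hρ : 1 < ρ) (hc : 0 < c)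
    (n : ℕ) (hn : 1 ≤ n) (hp1 : lam / (n:ℝ) ≤ 1)
    (hM : c * (Real.exp 1 * lam / ρ) < 1) :
    ∑ ω ∈ (Finset.univ : Finset (Sym2 (Fin n) → Bool)).filter (fun ω =>
        ∃ U : Finset (Fin n), U.Nonempty ∧ (U.card : ℝ) ≤ c * n ∧
          ρ * U.card <
            ((Finset.univ.filter (fun e : Sym2 (Fin n) =>
                e ∈ U.sym2 ∧ ¬e.IsDiag ∧ ω e = true)).card : ℝ)),
      ∏ e : Sym2 (Fin n), (if ω e then lam / n else 1 - lam / n)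
    ≤ ∑ k ∈ Finset.Icc 1 n, (if (k : ℝ) ≤ c * n then
        (Real.exp 1 * (Real.exp 1 * lam / ρ) ^ (ρ : ℝ) * (((k : ℝ) / n) ^ (ρ - 1))) ^ k else 0) := by
  have hn0 : (0:ℝ) < n := by exact_mod_cast hn
  have hp0 : 0 ≤ lam / (n:ℝ) := by positivity
  refine le_trans (event_le_sum_gk lam ρ c n hp0 hp1) ?_
  refine le_trans (group_by_card c
    (fun k => (((k ^ 2).choose ⌈ρ * k⌉₊ : ℝ) * (lam / n) ^ ⌈ρ * k⌉₊))
    (fun k => by positivity)) ?_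
  exact final_numeric lam ρ c hlam hρ hc n hn hM

/-- For `G ~ G(n, λ/n)` and `ρ > 1`: there is a constant `C = C(λ,ρ)` such that whenever
`c > 0` satisfies `(ρ-1)·log(1/c) > C`, the probability that some nonempty vertex set `U`
with `|U| ≤ cn` induces a subgraph with edge-vertex ratio strictly greater than `ρ` tends
to `0` as `n → ∞`. Edges are indexed by `Sym2 (Fin n)`, each present independently with
probability `λ/n`. -/
theorem no_small_dense_subgraph (lam ρ : ℝ) (hlam : 0 < lam) (hρ : 1 < ρ) :
    ∃ C : ℝ, ∀ c : ℝ, 0 < c → c ≤ 1 → (ρ - 1) * Real.log (1 / c) > C →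
      Tendsto (fun n : ℕ =>
          ∑ ω ∈ (Finset.univ : Finset (Sym2 (Fin n) → Bool)).filter (fun ω =>
              ∃ U : Finset (Fin n), U.Nonempty ∧ (U.card : ℝ) ≤ c * n ∧
                ρ * U.card <
                  ((Finset.univ.filter (fun e : Sym2 (Fin n) =>
                      e ∈ U.sym2 ∧ ¬e.IsDiag ∧ ω e = true)).card : ℝ)),
            ∏ e : Sym2 (Fin n), (if ω e then lam / n else 1 - lam / n))
        atTop (nhds 0) := by
  classical
  have hρ0 : (0:ℝ) < ρ := by linarith
  have hρ1 : (0:ℝ) < ρ - 1 := by linarith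
  set A : ℝ := Real.exp 1 * (Real.exp 1 * lam / ρ) ^ (ρ : ℝ) with hAdef
  have hA0 : 0 < A := by
    rw [hAdef]
    have h1 : (0:ℝ) < Real.exp 1 * lam / ρ := by positivity
    positivity
  set M : ℝ := max (Real.exp 1 * lam / ρ) 1 with hMdef
  set A' : ℝ := max A 1 with hA'def
  have hM1 : (1:ℝ) ≤ M := le_max_right _ _
  have hA'1 : (1:ℝ) ≤ A' := le_max_right _ _
  have hAA' : A ≤ A' := le_max_left _ _
  refine ⟨(ρ - 1) * Real.log M + Real.log (2 * A'), ?_⟩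
  intro c hc hc1 hC
  -- consequences of the constant condition
  have hlogM : 0 ≤ Real.log M := Real.log_nonneg hM1
  have hlog2A' : 0 < Real.log (2 * A') := Real.log_pos (by linarith)
  have hstep1 : (ρ - 1) * Real.log M < (ρ - 1) * Real.log (1 / c) := by linarith
  have hlogMc : Real.log M < Real.log (1 / c) :=
    lt_of_mul_lt_mul_left hstep1 (le_of_lt hρ1)
  have hMc : M < 1 / c := by
    have h := Real.exp_lt_exp.2 hlogMc
    rwa [Real.exp_log (by linarith : (0:ℝ) < M), Real.exp_log (by positivity : (0:ℝ) < 1 / c)] at h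
  have hcM : c * M < 1 := by
    rw [lt_div_iff₀ hc] at hMc
    linarith
  have hMfinal : c * (Real.exp 1 * lam / ρ) < 1 := by
    have : c * (Real.exp 1 * lam / ρ) ≤ c * M :=
      mul_le_mul_of_nonneg_left (le_max_left _ _) (le_of_lt hc)
    linarith
  have hAc : A * c ^ (ρ - 1) ≤ 1 / 2 := by
    have hmul0 : 0 ≤ (ρ - 1) * Real.log M := by positivity
    have hstep2 : Real.log (2 * A') < (ρ - 1) * Real.log (1 / c) := by linarith
    have hX0 : (0:ℝ) < c ^ (ρ - 1) := Real.rpow_pos_of_pos hc _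
    have hY0 : (0:ℝ) < (1 / c) ^ (ρ - 1) := Real.rpow_pos_of_pos (by positivity) _
    have hXY : c ^ (ρ - 1) * (1 / c) ^ (ρ - 1) = 1 := by
      rw [← Real.mul_rpow (le_of_lt hc) (by positivity)]
      rw [mul_one_div_cancel (ne_of_gt hc), Real.one_rpow]
    have hY : 2 * A' < (1 / c) ^ (ρ - 1) := by
      have hlogY : Real.log ((1 / c) ^ (ρ - 1)) = (ρ - 1) * Real.log (1 / c) :=
        Real.log_rpow (by positivity) _
      have h := Real.exp_lt_exp.2 (hlogY ▸ hstep2)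
      rwa [Real.exp_log (by linarith : (0:ℝ) < 2 * A'), Real.exp_log hY0] at h
    have h1 : c ^ (ρ - 1) * (2 * A') < 1 := by
      calc c ^ (ρ - 1) * (2 * A') < c ^ (ρ - 1) * ((1 / c) ^ (ρ - 1)) :=
            mul_lt_mul_of_pos_left hY hX0
        _ = 1 := hXY
    have h2 : A * c ^ (ρ - 1) ≤ A' * c ^ (ρ - 1) :=
      mul_le_mul_of_nonneg_right hAA' (le_of_lt hX0)
    nlinarith
  -- limit machinery
  have hsqrt : Tendsto (fun n : ℕ => Nat.sqrt n) atTop atTop := by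
    apply Filter.tendsto_atTop_atTop.2
    intro b
    exact ⟨b * b, fun n hn => Nat.le_sqrt.2 hn⟩
  have hsqrtR : Tendsto (fun n : ℕ => (Nat.sqrt n : ℝ)) atTop atTop :=
    tendsto_natCast_atTop_atTop.comp hsqrt
  set δ : ℕ → ℝ := fun n => ((Nat.sqrt n : ℝ))⁻¹ ^ (ρ - 1) with hδdef
  have hδeq : δ = (fun x : ℝ => x ^ (-(ρ - 1))) ∘ (fun n : ℕ => (Nat.sqrt n : ℝ)) := by
    funext n
    simp only [hδdef, Function.comp_apply]
    rw [Real.rpow_neg (Nat.cast_nonneg _), ← Real.inv_rpow (Nat.cast_nonneg _)]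
  have hδ0 : Tendsto δ atTop (nhds 0) := by
    rw [hδeq]
    exact (tendsto_rpow_neg_atTop hρ1).comp hsqrtR
  have hgeo : Tendsto (fun n : ℕ => (n : ℝ) * (1 / 2 : ℝ) ^ Nat.sqrt n) atTop (nhds 0) := by
    have hg : Tendsto (fun m : ℕ => ((m : ℝ)) ^ 2 * (1 / 2 : ℝ) ^ m) atTop (nhds 0) :=
      tendsto_pow_const_mul_const_pow_of_lt_one 2 (by norm_num) (by norm_num)
    have hg1 : Tendsto (fun m : ℕ => (((m + 1 : ℕ)) : ℝ) ^ 2 * (1 / 2 : ℝ) ^ (m + 1) * 2)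
        atTop (nhds 0) := by
      have h := (hg.comp (tendsto_add_atTop_nat 1)).mul_const 2
      simpa using h
    apply squeeze_zero (fun n => by positivity)
      (g := fun n : ℕ => (((Nat.sqrt n + 1 : ℕ)) : ℝ) ^ 2 * (1 / 2 : ℝ) ^ (Nat.sqrt n + 1) * 2) ?_
    · exact hg1.comp hsqrt
    · intro n
      have h1 : (n : ℝ) ≤ (((Nat.sqrt n + 1 : ℕ)) : ℝ) ^ 2 := by
        exact_mod_cast le_of_lt (Nat.lt_succ_sqrt' n)
      have h2 : ((1:ℝ) / 2) ^ (Nat.sqrt n + 1) * 2 = (1 / 2 : ℝ) ^ Nat.sqrt n := by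
        rw [pow_succ]; ring
      calc (n : ℝ) * (1 / 2 : ℝ) ^ Nat.sqrt n
          ≤ (((Nat.sqrt n + 1 : ℕ)) : ℝ) ^ 2 * (1 / 2 : ℝ) ^ Nat.sqrt n :=
            mul_le_mul_of_nonneg_right h1 (by positivity)
        _ = (((Nat.sqrt n + 1 : ℕ)) : ℝ) ^ 2 * (1 / 2 : ℝ) ^ (Nat.sqrt n + 1) * 2 := by
            rw [← h2]; ring
  have htotal : Tendsto (fun n : ℕ => 2 * (A * δ n) + (n : ℝ) * (1 / 2 : ℝ) ^ Nat.sqrt n)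
      atTop (nhds 0) := by
    have h1 : Tendsto (fun n : ℕ => 2 * (A * δ n)) atTop (nhds 0) := by
      have := hδ0.const_mul (2 * A)
      simp only [mul_zero] at this
      convert this using 2 with n
      ring
    have := h1.add hgeo
    simpa using this
  have hAδev : ∀ᶠ n : ℕ in atTop, A * δ n ≤ 1 / 2 := by
    have h : Tendsto (fun n : ℕ => A * δ n) atTop (nhds 0) := by
      have := hδ0.const_mul A
      simpa using this
    exact (h.eventually_lt_const (by norm_num : (0:ℝ) < 1 / 2)).mono fun n hn => le_of_lt hn
  have hbasic : ∀ᶠ n : ℕ in atTop, 1 ≤ n ∧ lam / (n : ℝ) ≤ 1 := by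
    rw [Filter.eventually_atTop]
    refine ⟨max 1 ⌈lam⌉₊, fun n hn => ?_⟩
    have h1 : 1 ≤ n := le_trans (le_max_left _ _) hn
    have h2 : ⌈lam⌉₊ ≤ n := le_trans (le_max_right _ _) hn
    have hn0 : (0:ℝ) < n := by exact_mod_cast h1
    refine ⟨h1, ?_⟩
    rw [div_le_one hn0]
    calc lam ≤ (⌈lam⌉₊ : ℝ) := Nat.le_ceil lam
      _ ≤ (n : ℝ) := by exact_mod_cast h2
  apply squeeze_zero' (g := fun n : ℕ => 2 * (A * δ n) + (n : ℝ) * (1 / 2 : ℝ) ^ Nat.sqrt n)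
  · filter_upwards [hbasic] with n hn
    apply Finset.sum_nonneg
    intro ω _
    apply Finset.prod_nonneg
    intro e _
    have hn0 : (0:ℝ) < n := by exact_mod_cast hn.1
    by_cases h : ω e <;> simp [h] <;> [positivity; linarith [hn.2]]
  · filter_upwards [hbasic, hAδev] with n hn hAδn
    refine le_trans (per_n_bound lam ρ c hlam hρ hc n hn.1 hn.2 hMfinal) ?_
    exact tail_sum_bound A ρ c hA0 hρ hc n hn.1 hAc hAδn
  · exact htotal
end
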